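/- arXiv:2409.17701 — 6 statements merged into one kernel-verified Lean document; each statement's English description precedes it below -/
import Mathlib

section
/- Let X be a metrizable space with a metric d generating its topology, and let X ⊕ {pt} be the topological sum of X with a one-point space. For each u ∈ X define d_u on X ⊕ {pt} by: d_u(x,y) = d(x,y) for x,y ∈ X; d_u(x, pt) = d_u(pt, x) = d(x,u) + 1 for x ∈ X; and d_u(pt, pt) = 0. Then each d_u is a metric on X ⊕ {pt} generating its topology, and the map u ↦ d_u is an isometric embedding of (X, d) into the space of metrics on X ⊕ {pt} equipped with the sup-metric. -/
open scoped ENNReal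
open Filter Topology

/-- `m` is a pseudometric on `X`. -/
def IsPseudometricOn {X : Type*} (m : X → X → ℝ) : Prop :=
  (∀ x y, 0 ≤ m x y) ∧ (∀ x, m x x = 0) ∧ (∀ x y, m x y = m y x) ∧
    ∀ x y z, m x z ≤ m x y + m y z

/-- `m` is a metric on `X`. -/
def IsMetricOn {X : Type*} (m : X → X → ℝ) : Prop :=
  (∀ x y, 0 ≤ m x y) ∧ (∀ x y, m x y = 0 ↔ x = y) ∧ (∀ x y, m x y = m y x) ∧
    ∀ x y z, m x z ≤ m x y + m y z

/-- The metric topology induced by `m` coincides with the given topology on `X`: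
a set is open iff around each of its points it contains an `m`-ball. -/
def GeneratesTopology {X : Type*} [TopologicalSpace X] (m : X → X → ℝ) : Prop :=
  ∀ s : Set X, IsOpen s ↔ ∀ x ∈ s, ∃ ε > 0, ∀ y, m x y < ε → y ∈ s

/-- The metric `d_u` on the topological sum `X ⊕ {pt}`. -/
def addedPointDist {X : Type*} (d : X → X → ℝ) (u : X) : X ⊕ Unit → X ⊕ Unit → ℝ
  | Sum.inl x, Sum.inl y => d x y
  | Sum.inl x, Sum.inr _ => d x u + 1
  | Sum.inr _, Sum.inl y => d y u + 1
  | Sum.inr _, Sum.inr _ => 0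

/-- for a metric `d` generating the topology of `X`, each `d_u` is a
metric on `X ⊕ {pt}` generating its topology, and `u ↦ d_u` is an isometric
embedding of `(X, d)` into the space of metrics on `X ⊕ {pt}` with sup-metric. -/
theorem addedPointDist_isometric_embedding {X : Type*} [TopologicalSpace X]
    [TopologicalSpace.MetrizableSpace X] (d : X → X → ℝ)
    (hd : IsMetricOn d) (hgen : GeneratesTopology d) :
    (∀ u : X, IsMetricOn (addedPointDist d u) ∧
        GeneratesTopology (addedPointDist d u)) ∧
      ∀ u v : X,
        (⨆ p : (X ⊕ Unit) × (X ⊕ Unit),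
          |addedPointDist d u p.1 p.2 - addedPointDist d v p.1 p.2|) = d u v := by
  obtain ⟨hnn, heq, hsymm, htri⟩ := hd
  have hzero : ∀ x, d x x = 0 := fun x => (heq x x).mpr rfl
  constructor
  · intro u
    constructor
    · refine ⟨?_, ?_, ?_, ?_⟩
      · rintro (x | x) (y | y)
        · exact hnn x y
        · have := hnn x u; simp only [addedPointDist]; linarith
        · have := hnn y u; simp only [addedPointDist]; linarith
        · simp [addedPointDist]
      · rintro (x | x) (y | y)
        · simpa [addedPointDist] using heq x y
        · simp only [addedPointDist]; have := hnn x u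
          constructor
          · intro h; linarith
          · intro h; exact absurd h (by simp)
        · simp only [addedPointDist]; have := hnn y u
          constructor
          · intro h; linarith
          · intro h; exact absurd h (by simp)
        · simp [addedPointDist]
      · rintro (x | x) (y | y) <;> simp only [addedPointDist]
        exact hsymm x y
      · rintro (x | x) (y | y) (z | z) <;> simp only [addedPointDist]
        · exact htri x y z
        · linarith [htri x y u]
        · linarith [htri x u z, hsymm u z, hnn u u]
        · linarith
        · linarith [htri z y u, hsymm z y]
        · linarith [hnn y u]
        · linarith
        · linarith
    · intro s
      rw [isOpen_sum_iff]
      constructor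
      · rintro ⟨h1, h2⟩ (x | x) hx
        · obtain ⟨ε, hε, hball⟩ := (hgen _).mp h1 x hx
          refine ⟨min ε 1, lt_min hε one_pos, ?_⟩
          rintro (y | y) hy
          · exact hball y (lt_of_lt_of_le hy (min_le_left _ _))
          · simp only [addedPointDist] at hy
            have h1 := lt_of_lt_of_le hy (min_le_right ε 1)
            have := hnn x u; linarith
        · refine ⟨1, one_pos, ?_⟩
          rintro (y | y) hy
          · simp only [addedPointDist] at hy
            have := hnn y u; linarith
          · cases y; cases x; exact hx
      · intro h
        constructor
        · rw [hgen]
          intro x hx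
          obtain ⟨ε, hε, hball⟩ := h (Sum.inl x) hx
          exact ⟨ε, hε, fun y hy => hball (Sum.inl y) hy⟩
        · exact isOpen_discrete _
  · intro u v
    have hbd : ∀ p : (X ⊕ Unit) × (X ⊕ Unit),
        |addedPointDist d u p.1 p.2 - addedPointDist d v p.1 p.2| ≤ d u v := by
      rintro ⟨(x | x), (y | y)⟩ <;> simp only [addedPointDist] <;>
        rw [abs_sub_le_iff]
      · constructor <;> simpa using hnn u v
      · constructor
        · linarith [htri x v u, hsymm v u]
        · linarith [htri x u v]
      · constructor
        · linarith [htri y v u, hsymm v u]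
        · linarith [htri y u v]
      · constructor <;> simpa using hnn u v
    refine le_antisymm (ciSup_le hbd) ?_
    have := le_ciSup (f := fun p : (X ⊕ Unit) × (X ⊕ Unit) =>
        |addedPointDist d u p.1 p.2 - addedPointDist d v p.1 p.2|)
      ⟨d u v, Set.forall_mem_range.mpr hbd⟩ (Sum.inl u, Sum.inr ())
    simpa [addedPointDist, hzero u, abs_of_nonneg (hnn u v)] using this
end

section
/- Let X be a metrizable space with metric d generating its topology, and define d_u for u ∈ X on X ⊕ {pt} as above. Then for all u, v ∈ X, sup over all pairs (x,y) in X ⊕ {pt} of |d_u(x,y) − d_v(x,y)| equals d(u,v); moreover if d is bounded then each d_u is bounded. -/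
open scoped ENNReal
open Filter Topology

/-- the sup of `|d_u - d_v|` over pairs in `X ⊕ {pt}` equals `d(u,v)`,
and if `d` is bounded then each `d_u` is bounded. -/
theorem addedPointDist_sup_eq {X : Type*} [TopologicalSpace X]
    [TopologicalSpace.MetrizableSpace X] (d : X → X → ℝ)
    (hd : IsMetricOn d) (hgen : GeneratesTopology d) :
    (∀ u v : X,
        (⨆ p : (X ⊕ Unit) × (X ⊕ Unit),
          |addedPointDist d u p.1 p.2 - addedPointDist d v p.1 p.2|) = d u v) ∧
      ((∃ C, ∀ x y, d x y ≤ C) →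
        ∀ u : X, ∃ C, ∀ p q : X ⊕ Unit, addedPointDist d u p q ≤ C) := by
  obtain ⟨hnn, heq, hsymm, htri⟩ := hd
  constructor
  · intro u v
    have hbound : ∀ p : (X ⊕ Unit) × (X ⊕ Unit),
        |addedPointDist d u p.1 p.2 - addedPointDist d v p.1 p.2| ≤ d u v := by
      rintro ⟨(x | _), (y | _)⟩ <;> simp only [addedPointDist]
      · simpa using hnn u v
      · rw [abs_sub_le_iff]
        constructor
        · have := htri x v u
          rw [hsymm v u] at this; linarith
        · have := htri x u v
          linarith
      · rw [abs_sub_le_iff]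
        constructor
        · have := htri y v u
          rw [hsymm v u] at this; linarith
        · have := htri y u v
          linarith
      · simpa using hnn u v
    apply le_antisymm
    · exact Real.iSup_le hbound (hnn u v)
    · have h := le_ciSup ⟨d u v, Set.forall_mem_range.2 hbound⟩
        ((Sum.inl v, Sum.inr ()) : (X ⊕ Unit) × (X ⊕ Unit))
      simp only [addedPointDist] at h
      have hvv : d v v = 0 := (heq v v).2 rfl
      rw [hvv] at h
      calc d u v = |d v u + 1 - (0 + 1)| := by
            rw [hsymm u v]; rw [abs_of_nonneg (by linarith [hnn v u])]; ring
        _ ≤ _ := h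
  · rintro ⟨C, hC⟩ u
    have hC0 : 0 ≤ C := le_trans (hnn u u) (hC u u)
    refine ⟨C + 1, ?_⟩
    rintro (x | _) (y | _) <;> simp only [addedPointDist] <;>
      [skip; skip; skip; positivity]
    · linarith [hC x y]
    · linarith [hC x u]
    · linarith [hC y u]
end

section
/- There exists an isometric embedding of the Banach space ℓ^∞(ℕ) (with sup-norm distance) into the space Met(ℕ) of metrics on the countably infinite discrete space ℕ, equipped with the sup-metric D(d,e) = sup_{p,q ∈ ℕ} |d(p,q) − e(p,q)|. -/
open scoped ENNReal
open Filter Topology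

noncomputable section
namespace EllEmbed

/-- Path metric building block: distance `|F c x - F c y|` with `F c x = x + min c x`. -/
def P (c x y : ℝ) : ℝ := |(x + min c x) - (y + min c y)|

lemma P_nonneg (c x y : ℝ) : 0 ≤ P c x y := abs_nonneg _
lemma P_symm (c x y : ℝ) : P c x y = P c y x := abs_sub_comm _ _
lemma P_self (c x : ℝ) : P c x x = 0 := by simp [P]
lemma P_triangle (c x y z : ℝ) : P c x z ≤ P c x y + P c y z := abs_sub_le _ _ _

lemma P_of_le (c : ℝ) {x y : ℝ} (h : x ≤ y) :
    P c x y = (y - x) + (min c y - min c x) := by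
  have hm : min c x ≤ min c y := min_le_min le_rfl h
  rw [P, abs_sub_comm, abs_of_nonneg (by linarith)]
  ring

lemma abs_le_P (c x y : ℝ) : |x - y| ≤ P c x y := by
  rcases le_total x y with h | h
  · have hm : min c x ≤ min c y := min_le_min le_rfl h
    rw [abs_sub_comm, abs_of_nonneg (by linarith), P_of_le c h]
    linarith
  · have hm : min c y ≤ min c x := min_le_min le_rfl h
    rw [abs_of_nonneg (by linarith), P_symm, P_of_le c h]
    linarith

lemma min_sub_bounds (s t x : ℝ) :
    min (s - t) 0 ≤ min s x - min t x ∧ min s x - min t x ≤ max (s - t) 0 := by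
  constructor <;>
    (simp only [min_def, max_def]; split_ifs <;> linarith)

lemma P_sub_le (s t x y : ℝ) : |P s x y - P t x y| ≤ |s - t| := by
  have main : ∀ x y : ℝ, x ≤ y → |P s x y - P t x y| ≤ |s - t| := by
    intro x y h
    have h1 := min_sub_bounds s t x
    have h2 := min_sub_bounds s t y
    have e : max (s - t) 0 - min (s - t) 0 = |s - t| := by
      rcases le_total (s - t) 0 with h' | h'
      · rw [max_eq_right h', min_eq_left h', abs_of_nonpos h']; ring
      · rw [max_eq_left h', min_eq_right h', abs_of_nonneg h']; ring
    have key : P s x y - P t x y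
        = (min s y - min t y) - (min s x - min t x) := by
      rw [P_of_le s h, P_of_le t h]; ring
    rw [key, abs_le]
    constructor <;> linarith [abs_nonneg (s - t), h1.1, h1.2, h2.1, h2.2]
  rcases le_total x y with h | h
  · exact main x y h
  · rw [P_symm s, P_symm t]; exact main y x h

lemma P_sub_eq {s t x y : ℝ} (h1 : x ≤ s) (h2 : x ≤ t) (h3 : s ≤ y) (h4 : t ≤ y) :
    P s x y - P t x y = s - t := by
  have hxy : x ≤ y := h1.trans h3
  rw [P_of_le s hxy, P_of_le t hxy, min_eq_left h3, min_eq_left h4,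
    min_eq_right h1, min_eq_right h2]
  ring

/-- The metric on `ℕ × ℤ` associated to the sequence `a`. -/
def D (a : ℕ → ℝ) (x y : ℕ × ℤ) : ℝ :=
  if x.1 = y.1 then P (a x.1) (x.2 : ℝ) (y.2 : ℝ)
  else 1 + max (P (a x.1) (x.2 : ℝ) 0) (P (a y.1) (y.2 : ℝ) 0)

lemma D_nonneg (a : ℕ → ℝ) (x y : ℕ × ℤ) : 0 ≤ D a x y := by
  unfold D; split_ifs
  · exact P_nonneg _ _ _
  · have := le_max_left (P (a x.1) (x.2 : ℝ) 0) (P (a y.1) (y.2 : ℝ) 0)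
    have := P_nonneg (a x.1) (x.2 : ℝ) 0
    linarith

lemma D_symm (a : ℕ → ℝ) (x y : ℕ × ℤ) : D a x y = D a y x := by
  unfold D
  by_cases h : x.1 = y.1
  · rw [if_pos h, if_pos h.symm, h, P_symm]
  · rw [if_neg h, if_neg (Ne.symm h), max_comm]

lemma D_self (a : ℕ → ℝ) (x : ℕ × ℤ) : D a x x = 0 := by
  simp [D, P_self]

lemma one_le_D_of_ne (a : ℕ → ℝ) {x y : ℕ × ℤ} (h : x ≠ y) : 1 ≤ D a x y := by
  unfold D
  split_ifs with hf
  · have hs : x.2 ≠ y.2 := by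
      intro h2; exact h (Prod.ext hf h2)
    have h1 : (1 : ℤ) ≤ |x.2 - y.2| := Int.one_le_abs (sub_ne_zero.mpr hs)
    have h2 : (1 : ℝ) ≤ |(x.2 : ℝ) - (y.2 : ℝ)| := by
      have : ((1:ℤ):ℝ) ≤ ((|x.2 - y.2| : ℤ) : ℝ) := by exact_mod_cast h1
      push_cast at this
      simpa using this
    exact h2.trans (abs_le_P _ _ _)
  · have := le_max_left (P (a x.1) (x.2 : ℝ) 0) (P (a y.1) (y.2 : ℝ) 0)
    have := P_nonneg (a x.1) (x.2 : ℝ) 0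
    linarith

lemma D_triangle (a : ℕ → ℝ) (x y z : ℕ × ℤ) : D a x z ≤ D a x y + D a y z := by
  obtain ⟨n, j⟩ := x; obtain ⟨m, k⟩ := y; obtain ⟨r, l⟩ := z
  by_cases h1 : n = m
  · subst h1
    by_cases h2 : n = r
    · subst h2
      simp only [D, eq_self_iff_true, if_true, ite_true, if_pos rfl]
      exact P_triangle _ _ _ _
    · simp only [D, eq_self_iff_true, if_true, ite_true, if_pos rfl, if_neg h2]
      have t1 : P (a n) (j : ℝ) 0 ≤ P (a n) (j : ℝ) (k : ℝ) + P (a n) (k : ℝ) 0 :=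
        P_triangle _ _ _ _
      have hm : max (P (a n) (j : ℝ) 0) (P (a r) (l : ℝ) 0)
          ≤ P (a n) (j : ℝ) (k : ℝ) + max (P (a n) (k : ℝ) 0) (P (a r) (l : ℝ) 0) := by
        apply max_le
        · have := le_max_left (P (a n) (k : ℝ) 0) (P (a r) (l : ℝ) 0)
          linarith
        · have := le_max_right (P (a n) (k : ℝ) 0) (P (a r) (l : ℝ) 0)
          have := P_nonneg (a n) (j : ℝ) (k : ℝ)
          linarith
      linarith
  · by_cases h2 : m = r
    · subst h2
      have h3 : n ≠ m := h1
      simp only [D, eq_self_iff_true, if_true, ite_true, if_neg h3, if_pos rfl]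
      have t1 : P (a m) (l : ℝ) 0 ≤ P (a m) (l : ℝ) (k : ℝ) + P (a m) (k : ℝ) 0 :=
        P_triangle _ _ _ _
      have hm : max (P (a n) (j : ℝ) 0) (P (a m) (l : ℝ) 0)
          ≤ max (P (a n) (j : ℝ) 0) (P (a m) (k : ℝ) 0) + P (a m) (k : ℝ) (l : ℝ) := by
        apply max_le
        · have := le_max_left (P (a n) (j : ℝ) 0) (P (a m) (k : ℝ) 0)
          have := P_nonneg (a m) (k : ℝ) (l : ℝ)
          linarith
        · have := le_max_right (P (a n) (j : ℝ) 0) (P (a m) (k : ℝ) 0)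
          rw [P_symm (a m) (l : ℝ) (k : ℝ)] at t1
          linarith
      linarith
    · by_cases h3 : n = r
      · subst h3
        have h2' : ¬ m = n := fun h => h1 h.symm
        simp only [D, eq_self_iff_true, if_true, ite_true, if_pos rfl, if_neg h1, if_neg h2']
        have t1 : P (a n) (j : ℝ) (l : ℝ) ≤ P (a n) (j : ℝ) 0 + P (a n) (l : ℝ) 0 := by
          have h := P_triangle (a n) (j : ℝ) 0 (l : ℝ)
          rw [P_symm (a n) 0 (l : ℝ)] at h
          exact h
        have m1 := le_max_left (P (a n) (j : ℝ) 0) (P (a m) (k : ℝ) 0)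
        have m2 := le_max_right (P (a m) (k : ℝ) 0) (P (a n) (l : ℝ) 0)
        linarith
      · simp only [D, if_neg h1, if_neg h2, if_neg h3]
        have hm : max (P (a n) (j : ℝ) 0) (P (a r) (l : ℝ) 0)
            ≤ max (P (a n) (j : ℝ) 0) (P (a m) (k : ℝ) 0)
              + max (P (a m) (k : ℝ) 0) (P (a r) (l : ℝ) 0) := by
          apply max_le
          · have := le_max_left (P (a n) (j : ℝ) 0) (P (a m) (k : ℝ) 0)
            have h0 : 0 ≤ max (P (a m) (k : ℝ) 0) (P (a r) (l : ℝ) 0) :=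
              le_trans (P_nonneg _ _ _) (le_max_left _ _)
            linarith
          · have := le_max_right (P (a m) (k : ℝ) 0) (P (a r) (l : ℝ) 0)
            have h0 : 0 ≤ max (P (a n) (j : ℝ) 0) (P (a m) (k : ℝ) 0) :=
              le_trans (P_nonneg _ _ _) (le_max_left _ _)
            linarith
        linarith

end EllEmbed

open EllEmbed in
/-- `ℓ^∞(ℕ)` embeds isometrically into the space `Met(ℕ)` of metrics
on the countably infinite discrete space, with the sup-metric. -/
theorem ellinfty_embeds_into_metrics_on_nat :
    ∃ H : BoundedContinuousFunction ℕ ℝ → (ℕ → ℕ → ℝ),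
      (∀ a, IsMetricOn (H a) ∧ ∀ p : ℕ, ∃ ε > 0, ∀ q, H a p q < ε → q = p) ∧
      ∀ a b : BoundedContinuousFunction ℕ ℝ,
        (⨆ pq : ℕ × ℕ, |H a pq.1 pq.2 - H b pq.1 pq.2|) = dist a b := by
  classical
  let φ : ℕ ≃ ℕ × ℤ := (Denumerable.eqv (ℕ × ℤ)).symm
  refine ⟨fun a p q => D (⇑a) (φ p) (φ q), ?_, ?_⟩
  · intro a
    refine ⟨⟨fun p q => D_nonneg _ _ _, fun p q => ?_, fun p q => D_symm _ _ _,
      fun p q r => D_triangle _ _ _ _⟩, fun p => ⟨1, one_pos, fun q h => ?_⟩⟩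
    · constructor
      · intro h0
        by_contra hne
        have hφ : φ p ≠ φ q := fun hc => hne (φ.injective hc)
        have := one_le_D_of_ne (⇑a) hφ
        linarith
      · rintro rfl
        exact D_self _ _
    · by_contra hne
      have hφ : φ p ≠ φ q := fun hc => hne (φ.injective hc).symm
      have := one_le_D_of_ne (⇑a) hφ
      linarith
  · intro a b
    have hco : ∀ n : ℕ, |a n - b n| ≤ dist a b := fun n => by
      have := BoundedContinuousFunction.dist_coe_le_dist (f := a) (g := b) n
      rwa [Real.dist_eq] at this
    have key : ∀ x y : ℕ × ℤ, |D (⇑a) x y - D (⇑b) x y| ≤ dist a b := by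
      intro x y
      by_cases h : x.1 = y.1
      · simp only [D, if_pos h]
        exact (P_sub_le _ _ _ _).trans (hco x.1)
      · simp only [D, if_neg h]
        have h1 : |P (a x.1) (x.2 : ℝ) 0 - P (b x.1) (x.2 : ℝ) 0| ≤ dist a b :=
          (P_sub_le _ _ _ _).trans (hco x.1)
        have h2 : |P (a y.1) (y.2 : ℝ) 0 - P (b y.1) (y.2 : ℝ) 0| ≤ dist a b :=
          (P_sub_le _ _ _ _).trans (hco y.1)
        have hmax := abs_max_sub_max_le_max (P (a x.1) (x.2 : ℝ) 0) (P (a y.1) (y.2 : ℝ) 0)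
          (P (b x.1) (x.2 : ℝ) 0) (P (b y.1) (y.2 : ℝ) 0)
        have e : (1 + max (P (a x.1) (x.2 : ℝ) 0) (P (a y.1) (y.2 : ℝ) 0))
            - (1 + max (P (b x.1) (x.2 : ℝ) 0) (P (b y.1) (y.2 : ℝ) 0))
            = max (P (a x.1) (x.2 : ℝ) 0) (P (a y.1) (y.2 : ℝ) 0)
              - max (P (b x.1) (x.2 : ℝ) 0) (P (b y.1) (y.2 : ℝ) 0) := by ring
        rw [e]
        exact hmax.trans (max_le h1 h2)
    have bdd : BddAbove (Set.range fun pq : ℕ × ℕ =>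
        |D (⇑a) (φ pq.1) (φ pq.2) - D (⇑b) (φ pq.1) (φ pq.2)|) := by
      refine ⟨dist a b, ?_⟩
      rintro _ ⟨pq, rfl⟩
      exact key _ _
    show (⨆ pq : ℕ × ℕ, |D (⇑a) (φ pq.1) (φ pq.2) - D (⇑b) (φ pq.1) (φ pq.2)|) = dist a b
    apply le_antisymm
    · exact ciSup_le fun pq => key _ _
    · set S := ⨆ pq : ℕ × ℕ, |D (⇑a) (φ pq.1) (φ pq.2) - D (⇑b) (φ pq.1) (φ pq.2)| with hSdef
      have h0S : 0 ≤ S := le_trans (abs_nonneg _) (le_ciSup bdd (0, 0))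
      refine (BoundedContinuousFunction.dist_le h0S).2 fun n => ?_
      rw [Real.dist_eq]
      set j : ℤ := ⌊min (a n) (b n)⌋ with hj
      set k : ℤ := ⌈max (a n) (b n)⌉ with hk
      have hja : (j : ℝ) ≤ a n := le_trans (Int.floor_le _) (min_le_left _ _)
      have hjb : (j : ℝ) ≤ b n := le_trans (Int.floor_le _) (min_le_right _ _)
      have hka : a n ≤ (k : ℝ) := le_trans (le_max_left _ _) (Int.le_ceil _)
      have hkb : b n ≤ (k : ℝ) := le_trans (le_max_right _ _) (Int.le_ceil _)
      have hdd : D (⇑a) (n, j) (n, k) - D (⇑b) (n, j) (n, k) = a n - b n := by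
        have hP := P_sub_eq hja hjb hka hkb
        simpa [D] using hP
      have hle := le_ciSup bdd (φ.symm (n, j), φ.symm (n, k))
      simp only [Equiv.apply_symm_apply] at hle
      calc |a n - b n|
          = |D (⇑a) (n, j) (n, k) - D (⇑b) (n, j) (n, k)| := by rw [hdd]
        _ ≤ S := hle
end
end

section
/- Every separable metric space embeds isometrically into the space Met(ℕ) of metrics on the countably infinite discrete space, equipped with the sup-metric. -/
open scoped ENNReal
open Filter Topology

/-- every separable metric space embeds isometrically into the
space `Met(ℕ)` of metrics on the countably infinite discrete space with sup-metric. -/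
theorem separable_embeds_into_metrics_on_nat {X : Type*} [MetricSpace X]
    [TopologicalSpace.SeparableSpace X] :
    ∃ F : X → (ℕ → ℕ → ℝ),
      (∀ x, IsMetricOn (F x) ∧ ∀ p : ℕ, ∃ ε > 0, ∀ q, F x p q < ε → q = p) ∧
      ∀ x y : X, (⨆ pq : ℕ × ℕ, |F x pq.1 pq.2 - F y pq.1 pq.2|) = dist x y := by
  rcases isEmpty_or_nonempty X with hX | hX
  · exact ⟨fun x => (IsEmpty.false x).elim, fun x => (IsEmpty.false x).elim,
      fun x => (IsEmpty.false x).elim⟩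
  obtain ⟨u, hu⟩ := TopologicalSpace.exists_dense_seq X
  set v : X → ℕ → X := fun x n => match n with | 0 => x | n + 1 => u n with hv
  set F : X → ℕ → ℕ → ℝ :=
    fun x p q => if p = q then 0 else dist (v x p) (v x q) + 1 with hF
  have hFd : ∀ x p q, p ≠ q → F x p q = dist (v x p) (v x q) + 1 := by
    intro x p q h; simp [hF, h]
  have hFr : ∀ x p, F x p p = 0 := by intro x p; simp [hF]
  have hpos : ∀ x p q, p ≠ q → (1:ℝ) ≤ F x p q := by
    intro x p q h
    rw [hFd x p q h]
    have := dist_nonneg (x := v x p) (y := v x q)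
    linarith
  have hnn : ∀ x p q, 0 ≤ F x p q := by
    intro x p q
    by_cases h : p = q
    · subst h; simp [hFr]
    · linarith [hpos x p q h]
  refine ⟨F, fun x => ⟨⟨hnn x, ?_, ?_, ?_⟩, ?_⟩, ?_⟩
  · intro p q
    constructor
    · intro h
      by_contra hpq
      have := hpos x p q hpq
      linarith
    · rintro rfl; exact hFr x p
  · intro p q
    by_cases h : p = q
    · subst h; rfl
    · rw [hFd x p q h, hFd x q p (Ne.symm h), dist_comm]
  · intro p q r
    by_cases hpr : p = r
    · subst hpr; rw [hFr]; positivity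
    by_cases hpq : p = q
    · subst hpq; rw [hFr]; linarith [le_refl (F x p r)]
    by_cases hqr : q = r
    · subst hqr; rw [hFr]; linarith [le_refl (F x p q)]
    · rw [hFd x p r hpr, hFd x p q hpq, hFd x q r hqr]
      have := dist_triangle (v x p) (v x q) (v x r)
      linarith
  · intro p
    refine ⟨1, one_pos, fun q hq => ?_⟩
    by_contra h
    have := hpos x p q (Ne.symm h)
    linarith
  · intro x y
    have hterm : ∀ pq : ℕ × ℕ, |F x pq.1 pq.2 - F y pq.1 pq.2| ≤ dist x y := by
      rintro ⟨p, q⟩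
      by_cases h : p = q
      · subst h; simp [hFr, dist_nonneg]
      · rw [hFd x p q h, hFd y p q h]
        have key : |dist (v x p) (v x q) - dist (v y p) (v y q)| ≤ dist x y := by
          match p, q with
          | 0, 0 => exact absurd rfl h
          | 0, k + 1 =>
            simpa [hv] using abs_dist_sub_le x y (u k)
          | k + 1, 0 =>
            simp only [hv]
            rw [dist_comm (u k) x, dist_comm (u k) y]
            exact abs_dist_sub_le x y (u k)
          | k + 1, j + 1 =>
            simpa [hv] using dist_nonneg (x := x) (y := y)
        calc |dist (v x p) (v x q) + 1 - (dist (v y p) (v y q) + 1)|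
            = |dist (v x p) (v x q) - dist (v y p) (v y q)| := by ring_nf
          _ ≤ dist x y := key
    have hbdd : BddAbove (Set.range fun pq : ℕ × ℕ => |F x pq.1 pq.2 - F y pq.1 pq.2|) :=
      ⟨dist x y, by rintro r ⟨pq, rfl⟩; exact hterm pq⟩
    refine le_antisymm (ciSup_le hterm) ?_
    refine le_of_forall_pos_le_add fun ε hε => ?_
    obtain ⟨n, hn⟩ := hu.exists_dist_lt x (half_pos hε)
    have h1 : dist x y - ε ≤ |F x 0 (n+1) - F y 0 (n+1)| := by
      rw [hFd x 0 (n+1) (by omega), hFd y 0 (n+1) (by omega)]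
      simp only [hv]
      have h2 : dist x y ≤ dist x (u n) + dist y (u n) := by
        rw [dist_comm y (u n)]; exact dist_triangle x (u n) y
      have h3 : dist y (u n) - dist x (u n) ≤ |dist x (u n) + 1 - (dist y (u n) + 1)| := by
        rw [abs_sub_comm]
        calc dist y (u n) - dist x (u n) ≤ dist y (u n) + 1 - (dist x (u n) + 1) := le_of_eq (by ring)
          _ ≤ |dist y (u n) + 1 - (dist x (u n) + 1)| := le_abs_self _
      have : dist x y - ε ≤ dist y (u n) - dist x (u n) := by linarith
      exact this.trans h3
    calc dist x y ≤ |F x 0 (n+1) - F y 0 (n+1)| + ε := by linarith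
      _ ≤ (⨆ pq : ℕ × ℕ, |F x pq.1 pq.2 - F y pq.1 pq.2|) + ε := by
          gcongr
          exact le_ciSup hbdd (0, n+1)
end

section
/- Let X and Y be metrizable spaces and f : X → Y a continuous surjection. If d is a bounded continuous pseudometric on Y generating bounded values, then for any fixed bounded metric ρ ∈ Met(X), the map h(d) = f*d + ρ defines an isometric embedding h : Met(Y) → Met(X) with h(BoundedMet(Y)) ⊆ BoundedMet(X), where f*d(x,y) = d(f(x),f(y)). -/
open scoped ENNReal
open Filter Topology

/-- for a continuous surjection `f : X → Y` and a fixed bounded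
metric `ρ ∈ Met(X)`, the map `d ↦ f*d + ρ` sends `Met(Y)` into `Met(X)`, sends
bounded metrics to bounded metrics, and preserves the sup-distance. -/
theorem pullback_plus_metric_isometric {X Y : Type*} [TopologicalSpace X]
    [TopologicalSpace.MetrizableSpace X] [TopologicalSpace Y]
    [TopologicalSpace.MetrizableSpace Y]
    (f : X → Y) (hf : Continuous f) (hsurj : Function.Surjective f)
    (ρ : X → X → ℝ) (hρ : IsMetricOn ρ) (hρgen : GeneratesTopology ρ)
    (hρbdd : ∃ C, ∀ x y, ρ x y ≤ C) :
    (∀ d : Y → Y → ℝ, IsMetricOn d → GeneratesTopology d →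
        IsMetricOn (fun x y => d (f x) (f y) + ρ x y) ∧
        GeneratesTopology (fun x y => d (f x) (f y) + ρ x y) ∧
        ((∃ C, ∀ u v, d u v ≤ C) → ∃ C, ∀ x y, d (f x) (f y) + ρ x y ≤ C)) ∧
      ∀ d e : Y → Y → ℝ, IsMetricOn d → GeneratesTopology d →
        IsMetricOn e → GeneratesTopology e →
        (⨆ p : X × X, ENNReal.ofReal
            |(d (f p.1) (f p.2) + ρ p.1 p.2) - (e (f p.1) (f p.2) + ρ p.1 p.2)|) =
          ⨆ p : Y × Y, ENNReal.ofReal |d p.1 p.2 - e p.1 p.2| := by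
  obtain ⟨hρ0, hρeq, hρsymm, hρtri⟩ := hρ
  constructor
  · intro d hd hdgen
    obtain ⟨hd0, hdeq, hdsymm, hdtri⟩ := hd
    refine ⟨⟨fun x y => add_nonneg (hd0 _ _) (hρ0 _ _), ?_, ?_, ?_⟩, ?_, ?_⟩
    · intro x y
      constructor
      · intro h
        have h1 : ρ x y = 0 := by
          have := hd0 (f x) (f y); have := hρ0 x y
          simp only at h; linarith
        exact (hρeq x y).mp h1
      · rintro rfl
        simp only [(hρeq x x).mpr rfl, (hdeq (f x) (f x)).mpr rfl, add_zero]
    · intro x y; simp only [hdsymm (f x) (f y), hρsymm x y]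
    · intro x y z
      have h1 := hdtri (f x) (f y) (f z); have h2 := hρtri x y z
      simp only; linarith
    · -- GeneratesTopology
      intro s
      constructor
      · intro hs x hx
        obtain ⟨ε, hε, hb⟩ := (hρgen s).mp hs x hx
        exact ⟨ε, hε, fun y hy => hb y (by have := hd0 (f x) (f y); simp only at hy; linarith)⟩
      · intro h
        rw [hρgen]
        intro x hx
        obtain ⟨ε, hε, hb⟩ := h x hx
        have hV : IsOpen {y' : Y | d (f x) y' < ε / 2} := by
          rw [hdgen]
          intro y' hy'
          simp only [Set.mem_setOf_eq] at hy'
          refine ⟨ε / 2 - d (f x) y', by linarith, fun z hz => ?_⟩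
          have := hdtri (f x) y' z
          simp only [Set.mem_setOf_eq]
          linarith
        have hU : IsOpen (f ⁻¹' {y' : Y | d (f x) y' < ε / 2}) := hV.preimage hf
        have hxU : x ∈ f ⁻¹' {y' : Y | d (f x) y' < ε / 2} := by
          simp only [Set.mem_preimage, Set.mem_setOf_eq, (hdeq (f x) (f x)).mpr rfl]
          linarith
        obtain ⟨δ₁, hδ₁, hb₁⟩ := (hρgen _).mp hU x hxU
        refine ⟨min δ₁ (ε / 2), lt_min hδ₁ (by linarith), fun y hy => ?_⟩
        have h1 : d (f x) (f y) < ε / 2 :=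
          hb₁ y (lt_of_lt_of_le hy (min_le_left _ _))
        have h2 : ρ x y < ε / 2 := lt_of_lt_of_le hy (min_le_right _ _)
        exact hb y (by simp only; linarith)
    · rintro ⟨C, hC⟩
      obtain ⟨C', hC'⟩ := hρbdd
      exact ⟨C + C', fun x y => add_le_add (hC _ _) (hC' _ _)⟩
  · intro d e hd hdgen he hegen
    have hsimp : ∀ p : X × X,
        (d (f p.1) (f p.2) + ρ p.1 p.2) - (e (f p.1) (f p.2) + ρ p.1 p.2) =
          d (f p.1) (f p.2) - e (f p.1) (f p.2) := fun p => by ring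
    apply le_antisymm
    · refine iSup_le fun p => ?_
      rw [hsimp]
      exact le_iSup_of_le (f p.1, f p.2) le_rfl
    · refine iSup_le fun p => ?_
      obtain ⟨x, hx⟩ := hsurj p.1
      obtain ⟨y, hy⟩ := hsurj p.2
      refine le_iSup_of_le (x, y) ?_
      rw [hsimp]
      simp [hx, hy]
end

section
/- Let (X, d) be a metric space of finite diameter and X ⊕ {pt} the disjoint union with an added point. The assignment of Lemma (u ↦ d_u, where d_u(x, pt) = d(x, u) + 1 and d_u agrees with d on X) yields an isometric embedding of (X, d) into the set of bounded metrics on X ⊕ {pt} (generating its topology), equipped with the sup-metric. -/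
open scoped ENNReal
open Filter Topology

/-- for a metric `d` of finite diameter generating the topology of
`X`, the map `u ↦ d_u` is an isometric embedding of `(X, d)` into the set of
bounded metrics on `X ⊕ {pt}` generating its topology, with the sup-metric. -/
theorem addedPointDist_into_bounded_metrics {X : Type*} [TopologicalSpace X]
    [TopologicalSpace.MetrizableSpace X] (d : X → X → ℝ)
    (hd : IsMetricOn d) (hgen : GeneratesTopology d)
    (hbdd : ∃ C, ∀ x y, d x y ≤ C) :
    (∀ u : X, IsMetricOn (addedPointDist d u) ∧
        GeneratesTopology (addedPointDist d u) ∧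
        ∃ C, ∀ p q : X ⊕ Unit, addedPointDist d u p q ≤ C) ∧
      ∀ u v : X,
        (⨆ p : (X ⊕ Unit) × (X ⊕ Unit),
          |addedPointDist d u p.1 p.2 - addedPointDist d v p.1 p.2|) = d u v := by
  obtain ⟨hpos, heq, hsymm, htri⟩ := hd
  obtain ⟨C, hC⟩ := hbdd
  constructor
  · intro u
    refine ⟨⟨?_, ?_, ?_, ?_⟩, ?_, ?_⟩
    · rintro (x | x) (y | y)
      · exact hpos x y
      · simp only [addedPointDist]; linarith [hpos x u]
      · simp only [addedPointDist]; linarith [hpos y u]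
      · simp only [addedPointDist]; exact le_refl 0
    · rintro (x | x) (y | y)
      · simpa [addedPointDist] using heq x y
      · simp only [addedPointDist]
        constructor
        · intro h; exfalso; linarith [hpos x u]
        · intro h; exact absurd h (by simp)
      · simp only [addedPointDist]
        constructor
        · intro h; exfalso; linarith [hpos y u]
        · intro h; exact absurd h (by simp)
      · simp [addedPointDist]
    · rintro (x | x) (y | y) <;> simp only [addedPointDist]
      exact hsymm x y
    · rintro (x | x) (y | y) (z | z) <;> simp only [addedPointDist]
      · exact htri x y z
      · have := htri x y u; linarith
      · have h1 := htri x u z; have h2 := hsymm u z; linarith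
      · linarith
      · have h1 := htri z y u; have h2 := hsymm z y; linarith
      · linarith [hpos y u]
      · linarith
      · linarith
    · intro s
      rw [isOpen_sum_iff]
      constructor
      · rintro ⟨h1, h2⟩ (x | x) hx
        · obtain ⟨ε, hε, hb⟩ := (hgen _).mp h1 x hx
          refine ⟨min ε 1, lt_min hε one_pos, ?_⟩
          rintro (y | y) hy
          · exact hb y (lt_of_lt_of_le hy (min_le_left _ _))
          · exfalso
            simp only [addedPointDist] at hy
            have := min_le_right ε 1
            linarith [hpos x u]
        · refine ⟨1, one_pos, ?_⟩
          rintro (y | y) hy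
          · exfalso
            simp only [addedPointDist] at hy
            linarith [hpos y u]
          · exact hx
      · intro h
        constructor
        · rw [hgen]
          intro x hx
          obtain ⟨ε, hε, hb⟩ := h (Sum.inl x) hx
          exact ⟨ε, hε, fun y hy => hb (Sum.inl y) hy⟩
        · exact isOpen_discrete _
    · refine ⟨C + 1, ?_⟩
      rintro (x | x) (y | y) <;> simp only [addedPointDist]
      · linarith [hC x y]
      · linarith [hC x u]
      · linarith [hC y u]
      · linarith [hC u u, hpos u u]
  · intro u v
    have key : ∀ p : (X ⊕ Unit) × (X ⊕ Unit),
        |addedPointDist d u p.1 p.2 - addedPointDist d v p.1 p.2| ≤ d u v := by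
      rintro ⟨(x | x), (y | y)⟩ <;> simp only [addedPointDist]
      · simpa using hpos u v
      · rw [abs_le]
        constructor
        · have := htri x u v; have := hsymm u v; linarith
        · have := htri x v u; have := hsymm v u; linarith
      · rw [abs_le]
        constructor
        · have := htri y u v; have := hsymm u v; linarith
        · have := htri y v u; have := hsymm v u; linarith
      · simpa using hpos u v
    apply le_antisymm
    · exact ciSup_le key
    · have := le_ciSup ⟨d u v, Set.forall_mem_range.mpr key⟩
        ((Sum.inl v, Sum.inr ()) : (X ⊕ Unit) × (X ⊕ Unit))
      calc d u v = |addedPointDist d u (Sum.inl v) (Sum.inr ()) -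
            addedPointDist d v (Sum.inl v) (Sum.inr ())| := by
              simp [addedPointDist, (heq v v).mpr rfl, hsymm v u,
                abs_of_nonneg (hpos u v)]
        _ ≤ _ := this
end
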